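/- Let R be a semiring with a finite additive spine M of cardinality m, and V an R-module generated by a finite set S of cardinality s. Then every summand absorbing submodule of V is generated by at most m·s elements. -/

import Mathlib

def halo (R : Type*) {V : Type*} [Semiring R] [AddCommMonoid V] [Module R V]
    (S : Set V) : Set V :=
  {v | ∃ l m : R, l • v ∈ S ∧ m • (l • v) = v}

def IsAdditiveSpine (R : Type*) {V : Type*} [Semiring R] [AddCommMonoid V] [Module R V]
    (S : Set V) : Prop :=
  AddSubmonoid.closure (halo R S) = ⊤

def IsSA {R V : Type*} [Semiring R] [AddCommMonoid V] [Module R V]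
    (W : Submodule R V) : Prop :=
  ∀ x y : V, x + y ∈ W → x ∈ W ∧ y ∈ W

/-!
Write `w ∈ W` as `∑ fₓ • x` over the generators `x ∈ S`; summand absorption puts every `fₓ • x`
in `W`. Since `fₓ` is a sum of halo elements `c`, absorption again puts each `c • x` in `W`, and
with `l • c ∈ M`, `m • (l • c) = c` we get `c • x = m • ((l • c) • x)`, a multiple of an element of
`W ∩ M • S`. So the at most `|M|·|S|` elements of `W ∩ M • S` generate `W`.
-/

open Pointwise

section

variable {R V : Type*} [Semiring R] [AddCommMonoid V] [Module R V] {W : Submodule R V}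

theorem IsSA.mem_of_sum_mem (hW : IsSA W) {ι : Type*} {s : Finset ι} {f : ι → V}
    (hsum : ∑ i ∈ s, f i ∈ W) {i : ι} (hi : i ∈ s) : f i ∈ W := by
  classical
  induction s using Finset.induction with
  | empty => simp at hi
  | insert j s hj ih =>
    rw [Finset.sum_insert hj] at hsum
    obtain ⟨hfj, hrest⟩ := hW _ _ hsum
    rcases Finset.mem_insert.1 hi with rfl | hi
    · exact hfj
    · exact ih hrest hi

theorem smul_mem_span_of_mem_halo {M : Set R} {S : Set V} {c : R} (hc : c ∈ halo R M)
    {x : V} (hx : x ∈ S) (hcx : c • x ∈ W) :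
    c • x ∈ Submodule.span R ((W : Set V) ∩ M • S) := by
  obtain ⟨l, m, hlc, hmlc⟩ := hc
  have hgen : (l • c) • x ∈ (W : Set V) ∩ M • S :=
    ⟨smul_assoc l c x ▸ W.smul_mem l hcx, Set.smul_mem_smul hlc hx⟩
  rw [← hmlc, smul_assoc]
  exact Submodule.smul_mem _ m (Submodule.subset_span hgen)

theorem IsSA.smul_mem_span_of_mem_closure_halo (hW : IsSA W) {M : Set R} {S : Set V} {c : R}
    (hc : c ∈ AddSubmonoid.closure (halo R M)) {x : V} (hx : x ∈ S) (hcx : c • x ∈ W) :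
    c • x ∈ Submodule.span R ((W : Set V) ∩ M • S) := by
  induction hc using AddSubmonoid.closure_induction with
  | mem c hc => exact smul_mem_span_of_mem_halo hc hx hcx
  | zero => simp
  | add a b _ _ iha ihb =>
    rw [add_smul] at hcx ⊢
    obtain ⟨hax, hbx⟩ := hW _ _ hcx
    exact add_mem (iha hax) (ihb hbx)

theorem IsSA.eq_span_inter_smul (hW : IsSA W) {M : Set R} (hM : IsAdditiveSpine R M)
    (S : Finset V) (hS : Submodule.span R (S : Set V) = ⊤) :
    W = Submodule.span R ((W : Set V) ∩ M • S) := by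
  refine le_antisymm (fun w hw => ?_) (Submodule.span_le.2 Set.inter_subset_left)
  obtain ⟨f, -, rfl⟩ := Submodule.mem_span_finset.1 (hS ▸ Submodule.mem_top : w ∈ _)
  refine Submodule.sum_mem _ fun x hx => hW.smul_mem_span_of_mem_closure_halo ?_ hx
    (hW.mem_of_sum_mem hw hx)
  exact hM ▸ AddSubmonoid.mem_top (f x)

end

theorem sa_finitely_generated {R V : Type*} [Semiring R] [AddCommMonoid V] [Module R V]
    (M : Finset R) (hM : IsAdditiveSpine R (M : Set R))
    (S : Finset V) (hS : Submodule.span R (S : Set V) = ⊤)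
    (W : Submodule R V) (hW : IsSA W) :
    ∃ T : Finset V, T.card ≤ M.card * S.card ∧ Submodule.span R (T : Set V) = W := by
  classical
  refine ⟨(M • S).filter (· ∈ W), (Finset.card_filter_le _ _).trans Finset.card_smul_le, ?_⟩
  convert (hW.eq_span_inter_smul hM S hS).symm using 2
  ext v
  simp only [Finset.coe_filter, Set.mem_ofPred_eq, Set.mem_inter_iff, SetLike.mem_coe,
    ← Finset.coe_smul, and_comm]
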